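/- Let g be a finite-dimensional Lie algebra over a field k of characteristic zero whose Killing form κ is nondegenerate, let μ ∈ k, and for a,b,c,d ∈ g set T(a,b,c,d) = Tr(ad a ∘ ad b ∘ ad c ∘ ad d). Suppose that for all a,b,c,d ∈ g, T(a,b,c,d) + T(a,c,d,b) + T(a,d,b,c) = μ·(κ(a,c)κ(b,d) + κ(a,b)κ(c,d) + κ(a,d)κ(b,c)). Then for all a,b,c,d ∈ g: (3/2)·(T(a,b,c,d) + T(b,a,c,d)) − μ·(κ(a,c)κ(b,d) + κ(a,b)κ(c,d) + κ(a,d)κ(b,c)) = −(1/2)·κ([a,d],[b,c]) − (1/4)·κ([a,b],[c,d]). -/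

import Mathlib

open LieAlgebra in
/-- The quartic adjoint trace `T(a,b,c,d) = Tr(ad a ∘ ad b ∘ ad c ∘ ad d)`. -/
noncomputable def adTrace4 (k : Type*) {L : Type*} [Field k]
    [LieRing L] [LieAlgebra k L] (a b c d : L) : k :=
  LinearMap.trace k L (ad k L a ∘ₗ ad k L b ∘ₗ ad k L c ∘ₗ ad k L d)

/-!
Both sides are linear combinations of quartic traces `T`. Up to cyclic rotation, which preserves
`T`, every `T(w)` with `w` a word in the letters `a, b, c, d` equals one of the six traces whose
word starts with `a`, and `κ([x,y],[z,w])` expands into four of them since `ad` turns brackets into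
commutators. In these six unknowns, the claim is `½ e₁ + ¾ e₃ − ¼ e₂` for the instances
`e₁, e₂, e₃` of the hypothesis at `(a,b,c,d)`, `(a,b,d,c)` and `(b,a,c,d)`.
-/

open LieAlgebra

section

variable {k L : Type*} [Field k] [LieRing L] [LieAlgebra k L]

lemma ad_lie_eq_sub_comp (x y : L) :
    ad k L ⁅x, y⁆ = ad k L x ∘ₗ ad k L y - ad k L y ∘ₗ ad k L x := by
  ext z
  simp only [LinearMap.sub_apply, LinearMap.comp_apply, ad_apply, lie_lie]

lemma killingForm_lie_lie (a b c d : L) :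
    killingForm k L ⁅a, b⁆ ⁅c, d⁆ =
      adTrace4 k a b c d - adTrace4 k a b d c - adTrace4 k b a c d + adTrace4 k b a d c := by
  simp only [killingForm_apply_apply, ad_lie_eq_sub_comp, adTrace4, LinearMap.comp_sub,
    LinearMap.sub_comp, LinearMap.comp_assoc, map_sub]
  ring

variable [Module.Finite k L]

lemma adTrace4_rotate (a b c d : L) : adTrace4 k a b c d = adTrace4 k b c d a := by
  rw [adTrace4, adTrace4, LinearMap.trace_comp_comm']
  simp only [LinearMap.comp_assoc]

end

theorem adTrace4_GS_identity_general {k L : Type*} [Field k] [CharZero k]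
    [LieRing L] [LieAlgebra k L] [Module.Finite k L]
    (μ : k)
    (htrace : ∀ a b c d : L,
      adTrace4 k a b c d + adTrace4 k a c d b + adTrace4 k a d b c =
        μ * (killingForm k L a c * killingForm k L b d +
          killingForm k L a b * killingForm k L c d +
          killingForm k L a d * killingForm k L b c))
    (a b c d : L) :
    (3 / 2 : k) * (adTrace4 k a b c d + adTrace4 k b a c d) -
        μ * (killingForm k L a c * killingForm k L b d +
          killingForm k L a b * killingForm k L c d +
          killingForm k L a d * killingForm k L b c) =
      -(1 / 2 : k) * killingForm k L ⁅a, d⁆ ⁅b, c⁆ -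
        (1 / 4 : k) * killingForm k L ⁅a, b⁆ ⁅c, d⁆ := by
  have κ_comm (x y : L) : killingForm k L x y = killingForm k L y x :=
    LieModule.traceForm_comm k L L x y
  have e₁ := htrace a b c d
  have e₂ := htrace a b d c
  have e₃ := htrace b a c d
  rw [κ_comm d c] at e₂
  rw [adTrace4_rotate b a c d, ← adTrace4_rotate a b c d, adTrace4_rotate b d a c,
    adTrace4_rotate d a c b, κ_comm b a] at e₃
  rw [killingForm_lie_lie a d b c, killingForm_lie_lie a b c d, adTrace4_rotate d a b c,
    adTrace4_rotate d a c b, adTrace4_rotate b a c d, adTrace4_rotate b a d c]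
  linear_combination (1 / 2 : k) * e₁ + (3 / 4 : k) * e₃ - (1 / 4 : k) * e₂

/-- For a finite-dimensional Lie algebra over a field of characteristic zero with
nondegenerate Killing form `κ`, assuming the polarized quartic trace identity
`T(a,b,c,d) + T(a,c,d,b) + T(a,d,b,c) = μ·(κ(a,c)κ(b,d) + κ(a,b)κ(c,d) + κ(a,d)κ(b,c))`,
one has
`(3/2)·(T(a,b,c,d) + T(b,a,c,d)) − μ·(κ(a,c)κ(b,d) + κ(a,b)κ(c,d) + κ(a,d)κ(b,c))
  = −(1/2)·κ([a,d],[b,c]) − (1/4)·κ([a,b],[c,d])`. -/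
theorem adTrace4_GS_identity {k L : Type*} [Field k] [CharZero k]
    [LieRing L] [LieAlgebra k L] [Module.Finite k L]
    (hκ : (killingForm k L).Nondegenerate) (μ : k)
    (htrace : ∀ a b c d : L,
      adTrace4 k a b c d + adTrace4 k a c d b + adTrace4 k a d b c =
        μ * (killingForm k L a c * killingForm k L b d +
          killingForm k L a b * killingForm k L c d +
          killingForm k L a d * killingForm k L b c))
    (a b c d : L) :
    (3 / 2 : k) * (adTrace4 k a b c d + adTrace4 k b a c d) -
        μ * (killingForm k L a c * killingForm k L b d +
          killingForm k L a b * killingForm k L c d +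
          killingForm k L a d * killingForm k L b c) =
      -(1 / 2 : k) * killingForm k L ⁅a, d⁆ ⁅b, c⁆ -
        (1 / 4 : k) * killingForm k L ⁅a, b⁆ ⁅c, d⁆ :=
  adTrace4_GS_identity_general μ htrace a b c d
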